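/- arXiv:2006.06267 — 2 statements merged into one kernel-verified Lean document; each statement's English description precedes it below -/
import Mathlib

section
/- (Bernoulli/Binomial Taylor remainder, affine case.) For every real a, 0 ≤ log 2 + a/2 + a²/8 − log(1 + exp(a)) ≤ a⁴/192. Equivalently, with F(θ) = log(1 + exp(θ)) the log-normalizer of the Bernoulli family, the second-order Taylor polynomial of F at 0, namely F(0) + F′(0)a + F″(0)a²/2 = log 2 + a/2 + a²/8, is an upper bound for F(a), and the gap is at most a⁴/192 = (1/(8·4!))·a⁴. -/
open Real Set

/-!
Since `1 + exp a = exp (a / 2) * (2 * cosh (a / 2))`, the gap equals `b ^ 2 / 2 - log (cosh b)`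
with `b = a / 2`. The upper estimate `log (cosh b) ≤ b ^ 2 / 2` is `cosh b ≤ exp (b ^ 2 / 2)`.
The lower estimate `b ^ 2 / 2 - b ^ 4 / 12 ≤ log (cosh b)` integrates `x - x ^ 3 / 3 ≤ tanh x`
on `[0, ∞)`, which in turn integrates `sinh x ≤ x * cosh x`; evenness covers `b < 0`.
-/

lemma monotoneOn_Ici_of_hasDerivAt_nonneg {f f' : ℝ → ℝ} {a : ℝ}
    (hf : ∀ x, HasDerivAt f (f' x) x) (hf' : ∀ x, a ≤ x → 0 ≤ f' x) :
    MonotoneOn f (Ici a) :=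
  monotoneOn_of_hasDerivWithinAt_nonneg (convex_Ici a)
    (fun x _ ↦ (hf x).continuousAt.continuousWithinAt) (fun x _ ↦ (hf x).hasDerivWithinAt)
    (fun x hx ↦ hf' x (interior_subset hx))

namespace Real

lemma sinh_le_mul_cosh {x : ℝ} (hx : 0 ≤ x) : sinh x ≤ x * cosh x := by
  have hderiv (y : ℝ) : HasDerivAt (fun y ↦ y * cosh y - sinh y) (y * sinh y) y := by
    refine ((hasDerivAt_id' y).fun_mul (hasDerivAt_cosh y)).fun_sub (hasDerivAt_sinh y)
      |>.congr_deriv ?_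
    ring
  have := monotoneOn_Ici_of_hasDerivAt_nonneg hderiv
    (fun y hy ↦ mul_nonneg hy (sinh_nonneg_iff.mpr hy)) self_mem_Ici hx hx
  simp only [zero_mul, sinh_zero, sub_zero] at this
  linarith

lemma sub_cube_div_three_mul_cosh_le_sinh {x : ℝ} (hx : 0 ≤ x) :
    (x - x ^ 3 / 3) * cosh x ≤ sinh x := by
  have hderiv (y : ℝ) : HasDerivAt (fun y ↦ sinh y - (y - y ^ 3 / 3) * cosh y)
      (y * (y * cosh y - sinh y) + y ^ 3 / 3 * sinh y) y := by
    refine (hasDerivAt_sinh y).fun_sub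
      (((hasDerivAt_id' y).fun_sub ((hasDerivAt_pow 3 y).div_const 3)).fun_mul (hasDerivAt_cosh y))
      |>.congr_deriv ?_
    push_cast; ring
  have hderiv_nonneg (y : ℝ) (hy : 0 ≤ y) :
      0 ≤ y * (y * cosh y - sinh y) + y ^ 3 / 3 * sinh y :=
    add_nonneg (mul_nonneg hy (sub_nonneg.mpr (sinh_le_mul_cosh hy)))
      (mul_nonneg (by positivity) (sinh_nonneg_iff.mpr hy))
  have := monotoneOn_Ici_of_hasDerivAt_nonneg hderiv hderiv_nonneg self_mem_Ici hx hx
  simp only [sinh_zero, cosh_zero] at this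
  linarith

lemma sq_div_two_sub_le_log_cosh_of_nonneg {x : ℝ} (hx : 0 ≤ x) :
    x ^ 2 / 2 - x ^ 4 / 12 ≤ log (cosh x) := by
  have hderiv (y : ℝ) : HasDerivAt (fun y ↦ log (cosh y) - (y ^ 2 / 2 - y ^ 4 / 12))
      (sinh y / cosh y - (y - y ^ 3 / 3)) y := by
    refine ((hasDerivAt_cosh y).log (cosh_pos y).ne').fun_sub
      (((hasDerivAt_pow 2 y).div_const 2).fun_sub ((hasDerivAt_pow 4 y).div_const 12))
      |>.congr_deriv ?_
    push_cast; ring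
  have hderiv_nonneg (y : ℝ) (hy : 0 ≤ y) : 0 ≤ sinh y / cosh y - (y - y ^ 3 / 3) :=
    sub_nonneg.mpr <| (le_div_iff₀ (cosh_pos y)).mpr (sub_cube_div_three_mul_cosh_le_sinh hy)
  have := monotoneOn_Ici_of_hasDerivAt_nonneg hderiv hderiv_nonneg self_mem_Ici hx hx
  simp only [cosh_zero, log_one] at this
  linarith

lemma sq_div_two_sub_le_log_cosh (x : ℝ) : x ^ 2 / 2 - x ^ 4 / 12 ≤ log (cosh x) := by
  have := sq_div_two_sub_le_log_cosh_of_nonneg (abs_nonneg x)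
  rwa [cosh_abs, sq_abs, pow_abs, abs_of_nonneg (by positivity)] at this

lemma log_cosh_le_sq_div_two (x : ℝ) : log (cosh x) ≤ x ^ 2 / 2 :=
  (log_le_iff_le_exp (cosh_pos x)).mpr (cosh_le_exp_half_sq x)

lemma log_one_add_exp (a : ℝ) : log (1 + exp a) = log 2 + a / 2 + log (cosh (a / 2)) := by
  have hfactor : 1 + exp a = exp (a / 2) * (2 * cosh (a / 2)) := by
    rw [cosh_eq, mul_div_cancel₀ _ two_ne_zero, mul_add, ← exp_add, ← exp_add, add_neg_cancel,
      exp_zero, add_halves, add_comm]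
  rw [hfactor, log_mul (exp_pos _).ne' (by positivity), log_exp,
    log_mul two_ne_zero (cosh_pos _).ne']
  ring

end Real

/-- Bernoulli/Binomial Taylor remainder bound (affine case): for all real `a`,
`0 ≤ log 2 + a/2 + a²/8 − log(1 + exp a) ≤ a⁴/192`; i.e. the second-order
Taylor polynomial at 0 of the Bernoulli log-normalizer `F(θ) = log(1 + exp θ)`
bounds `F` from above, with gap at most `a⁴/(8·4!)`. -/
theorem stmt_8 (a : ℝ) :
    0 ≤ Real.log 2 + a / 2 + a ^ 2 / 8 - Real.log (1 + Real.exp a) ∧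
    Real.log 2 + a / 2 + a ^ 2 / 8 - Real.log (1 + Real.exp a) ≤ a ^ 4 / 192 := by
  have hupper := Real.log_cosh_le_sq_div_two (a / 2)
  have hlower := Real.sq_div_two_sub_le_log_cosh (a / 2)
  rw [Real.log_one_add_exp]
  constructor <;> linarith
end

section
/- Let d ≥ κ ≥ 1, let β > 0 and α > 0, and let Ŝ be a symmetric positive semidefinite real d×d matrix with eigenvalues λ₁ ≥ λ₂ ≥ … ≥ λ_d and corresponding orthonormal eigenvectors u₁, …, u_d. For W ∈ ℝ^{d×κ} define C(W) = α·I_d + β⁻¹·W Wᵀ and L(W) = −(1/2)·( tr(C(W)⁻¹ Ŝ) + β·log det C(W) ). Let U_κ ∈ ℝ^{d×κ} have columns u₁, …, u_κ, let k_j = λ_j if λ_j ≥ β·α and k_j = β·α otherwise, and set Ŵ = U_κ · diag( (k₁ − βα)^{1/2}, …, (k_κ − βα)^{1/2} ). Then Ŵ is a global maximizer of L: for all W ∈ ℝ^{d×κ}, L(W) ≤ L(Ŵ). Moreover, for any orthogonal κ×κ matrix R, L(Ŵ R) = L(Ŵ), so the maximizer is invariant under rotations. -/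
/-!
Diagonalise `W Wᵀ = V diag(μ) Vᵀ`. Then `C(W) = V diag(c) Vᵀ` with `cᵢ = α + μᵢ / β ≥ α`, and
`cᵢ = α` except at the at most `κ` indices where `μᵢ ≠ 0`. In the basis `V` the cost
`tr(C⁻¹ Ŝ) + β log det C` splits into `∑ᵢ sᵢ / cᵢ + β log cᵢ`, where `sᵢ = (Vᵀ Ŝ V)ᵢᵢ`.
Choosing `cᵢ ≥ α` optimally instead of `cᵢ = α` saves `g(sᵢ)`, and `g` is convex, monotone and
nonnegative, being a supremum of affine functions of `s` with nonnegative slopes. For the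
orthogonal matrix `Q = Uᵀ V` we have `sᵢ = ∑ₖ Qₖᵢ² λₖ`, so Jensen's inequality followed by a
fractional knapsack bound gives `∑_{μᵢ ≠ 0} g(sᵢ) ≤ ∑_{j < κ} g(λⱼ)`. This saving is exactly
the one `Ŵ` realises.
-/

open Matrix Finset

noncomputable section

/-- The cost of a direction with data variance `s` and model variance `c ≥ α` is
`s / c + β log c`. `optVariance` minimises it (for `s = λⱼ` it is the paper's `kⱼ / β`), and
`latentGain` is the saving compared with `c = α`. -/
def optVariance (β α s : ℝ) : ℝ := max s (β * α) / β

def latentGain (β α s : ℝ) : ℝ :=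
  s / α + β * Real.log α - (s / optVariance β α s + β * Real.log (optVariance β α s))

end

section LatentGain

variable {β α : ℝ}

lemma le_optVariance (hβ : 0 < β) (s : ℝ) : α ≤ optVariance β α s := by
  rw [optVariance, le_div_iff₀ hβ, mul_comm]
  exact le_max_right _ _

lemma div_add_log_optVariance_le (hβ : 0 < β) (hα : 0 < α) (s : ℝ) {c : ℝ} (hc : α ≤ c) :
    s / optVariance β α s + β * Real.log (optVariance β α s) ≤ s / c + β * Real.log c := by
  set c₀ := optVariance β α s
  have hc₀ : 0 < c₀ := hα.trans_le (le_optVariance hβ s)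
  have hc' : 0 < c := hα.trans_le hc
  have hlog := Real.one_sub_inv_le_log_of_pos (div_pos hc' hc₀)
  rw [Real.log_div hc'.ne' hc₀.ne', inv_div] at hlog
  -- Since `β c₀ = max s (βα)`, the bound `log x ≥ 1 - 1/x` at `x = c / c₀` leaves the excess
  -- `(β c₀ - s) (1/c₀ - 1/c)`, and one of its factors vanishes unless `c₀ = α ≤ c`.
  have hm : β * c₀ = max s (β * α) := mul_div_cancel₀ _ hβ.ne'
  have hprod : 0 ≤ (β * c₀ - s) * (1 / c₀ - 1 / c) := by
    rcases le_total (β * α) s with h | h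
    · rw [hm, max_eq_left h, sub_self, zero_mul]
    · have : c₀ = α := by rw [← mul_right_inj' hβ.ne', hm, max_eq_right h]
      rw [this] at hm ⊢
      apply mul_nonneg (by linarith)
      rw [sub_nonneg]
      exact one_div_le_one_div_of_le hα hc
  have hexcess : (β * c₀ - s) * (1 / c₀ - 1 / c) = s / c - s / c₀ + β * (1 - c₀ / c) := by
    field_simp
    ring
  linarith [mul_le_mul_of_nonneg_left hlog hβ.le]

lemma sub_le_latentGain (hβ : 0 < β) (hα : 0 < α) (s : ℝ) {c : ℝ} (hc : α ≤ c) :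
    s / α + β * Real.log α - (s / c + β * Real.log c) ≤ latentGain β α s := by
  have := div_add_log_optVariance_le hβ hα s hc
  rw [latentGain]
  linarith

lemma latentGain_nonneg (hβ : 0 < β) (hα : 0 < α) (s : ℝ) : 0 ≤ latentGain β α s := by
  simpa using sub_le_latentGain hβ hα s le_rfl

lemma latentGain_monotone (hβ : 0 < β) (hα : 0 < α) : Monotone (latentGain β α) := by
  intro s t hst
  set c := optVariance β α s
  have hc : α ≤ c := le_optVariance hβ s
  have hslope : s / α - s / c ≤ t / α - t / c := by
    rw [← mul_one_div s, ← mul_one_div s, ← mul_one_div t, ← mul_one_div t, ← mul_sub, ← mul_sub]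
    exact mul_le_mul_of_nonneg_right hst (sub_nonneg.2 (one_div_le_one_div_of_le hα hc))
  calc latentGain β α s = s / α + β * Real.log α - (s / c + β * Real.log c) := rfl
    _ ≤ t / α + β * Real.log α - (t / c + β * Real.log c) := by linarith
    _ ≤ latentGain β α t := sub_le_latentGain hβ hα t hc

lemma convexOn_latentGain (hβ : 0 < β) (hα : 0 < α) : ConvexOn ℝ Set.univ (latentGain β α) := by
  refine ⟨convex_univ, fun x _ y _ a b ha hb hab => ?_⟩
  set c := optVariance β α (a • x + b • y)
  have hc : α ≤ c := le_optVariance hβ _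
  obtain rfl : b = 1 - a := by linarith
  calc latentGain β α (a • x + (1 - a) • y)
      = a * (x / α + β * Real.log α - (x / c + β * Real.log c))
        + (1 - a) * (y / α + β * Real.log α - (y / c + β * Real.log c)) := by
        have hz : latentGain β α (a • x + (1 - a) • y) = (a • x + (1 - a) • y) / α + β * Real.log α
            - ((a • x + (1 - a) • y) / c + β * Real.log c) := rfl
        rw [hz, smul_eq_mul, smul_eq_mul]
        ring
    _ ≤ a • latentGain β α x + (1 - a) • latentGain β α y := by
        simp only [smul_eq_mul]
        gcongr
        exacts [sub_le_latentGain hβ hα x hc, sub_le_latentGain hβ hα y hc]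

end LatentGain

lemma Antitone.sum_mul_le_sum_filter_lt {d m : ℕ} {f p : Fin d → ℝ} (hf : Antitone f)
    (hf0 : ∀ i, 0 ≤ f i) (hp0 : ∀ i, 0 ≤ p i) (hp1 : ∀ i, p i ≤ 1) (hsum : ∑ i, p i ≤ m) :
    ∑ i, f i * p i ≤ ∑ i ∈ univ.filter (fun i : Fin d => (i : ℕ) < m), f i := by
  -- `t` separates the values of `f` on `{i < m}` from those on its complement
  set t : ℝ := if h : m < d then f ⟨m, h⟩ else 0
  have ht0 : 0 ≤ t := by unfold t; split_ifs <;> simp [hf0]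
  have hle : ∀ i, f i * p i ≤ (if (i : ℕ) < m then f i - t else 0) + t * p i := by
    intro i
    unfold t
    split_ifs with hi hm hm
    · nlinarith [hf (show (⟨m, hm⟩ : Fin d) ≥ i from Fin.mk_le_mk.2 hi.le), hp0 i, hp1 i]
    · nlinarith [hf0 i, hp0 i, hp1 i]
    · nlinarith [hf (show (⟨m, hm⟩ : Fin d) ≤ i from Fin.mk_le_mk.2 (not_lt.1 hi)), hp0 i]
    · exact absurd (i.isLt.trans_le (not_lt.1 hm)) hi
  have hcard : t * ∑ i, p i ≤ t * #(univ.filter fun i : Fin d => (i : ℕ) < m) := by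
    rw [Fin.card_filter_val_lt]
    unfold t
    split_ifs with hm
    · rw [min_eq_right hm.le]
      exact mul_le_mul_of_nonneg_left hsum (hf0 _)
    · simp
  calc ∑ i, f i * p i ≤ ∑ i : Fin d, ((if (i : ℕ) < m then f i - t else 0) + t * p i) :=
        sum_le_sum fun i _ => hle i
    _ = ∑ i ∈ univ.filter (fun i : Fin d => (i : ℕ) < m), f i
          - t * #(univ.filter fun i : Fin d => (i : ℕ) < m) + t * ∑ i, p i := by
        rw [sum_add_distrib, ← sum_filter, sum_sub_distrib, sum_const, nsmul_eq_mul, mul_sum,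
          mul_comm]
    _ ≤ ∑ i ∈ univ.filter (fun i : Fin d => (i : ℕ) < m), f i := by linarith

lemma Matrix.sum_sq_apply_eq_one_of_transpose_mul_eq_one {ι : Type*} [Fintype ι] [DecidableEq ι]
    {Q : Matrix ι ι ℝ} (hQ : Qᵀ * Q = 1) (i : ι) : ∑ k, Q k i ^ 2 = 1 := by
  simpa [mul_apply, sq] using congr_fun (congr_fun hQ i) i

lemma ConvexOn.sum_diag_conj_diagonal_le {d m : ℕ} {g : ℝ → ℝ} (hg : ConvexOn ℝ Set.univ g)
    (hg_mono : Monotone g) (hg0 : ∀ x, 0 ≤ g x) {lam : Fin d → ℝ} (hlam : Antitone lam)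
    {Q : Matrix (Fin d) (Fin d) ℝ} (hQ : Qᵀ * Q = 1) {T : Finset (Fin d)} (hT : #T ≤ m) :
    ∑ i ∈ T, g ((Qᵀ * diagonal lam * Q) i i)
      ≤ ∑ i ∈ univ.filter (fun i : Fin d => (i : ℕ) < m), g (lam i) := by
  have hQ' : Qᵀᵀ * Qᵀ = 1 := by rw [transpose_transpose, mul_eq_one_comm, hQ]
  have hcol := sum_sq_apply_eq_one_of_transpose_mul_eq_one hQ
  have hrow := sum_sq_apply_eq_one_of_transpose_mul_eq_one hQ'
  simp only [transpose_apply] at hrow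
  -- each diagonal entry is a convex combination of the `lam k`, with weights `Q k i ^ 2`
  have hjensen : ∀ i, g ((Qᵀ * diagonal lam * Q) i i) ≤ ∑ k, Q k i ^ 2 * g (lam k) := by
    intro i
    have hdiag : (Qᵀ * diagonal lam * Q) i i = ∑ k, Q k i ^ 2 • lam k := by
      rw [mul_apply]
      simp only [mul_diagonal, transpose_apply, smul_eq_mul]
      exact sum_congr rfl fun k _ => by ring
    rw [hdiag]
    exact hg.map_sum_le (fun k _ => sq_nonneg _) (hcol i) (fun k _ => Set.mem_univ _)
  calc ∑ i ∈ T, g ((Qᵀ * diagonal lam * Q) i i)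
      ≤ ∑ i ∈ T, ∑ k, Q k i ^ 2 * g (lam k) := sum_le_sum fun i _ => hjensen i
    _ = ∑ k, g (lam k) * ∑ i ∈ T, Q k i ^ 2 := by
        rw [sum_comm]
        simp only [mul_sum, mul_comm]
    _ ≤ ∑ i ∈ univ.filter (fun i : Fin d => (i : ℕ) < m), g (lam i) := by
        refine (hg_mono.comp_antitone hlam).sum_mul_le_sum_filter_lt (fun _ => hg0 _)
          (fun k => sum_nonneg fun i _ => sq_nonneg _) (fun k => ?_) ?_
        · exact (hrow k).symm ▸ sum_le_sum_of_subset_of_nonneg (subset_univ T)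
            (fun i _ _ => sq_nonneg _)
        · rw [sum_comm]
          simp only [hcol, sum_const, nsmul_eq_mul, mul_one]
          exact_mod_cast hT

lemma sum_castLE_eq_sum_filter_val_lt {M : Type*} [AddCommMonoid M] {κ d : ℕ} (h : κ ≤ d)
    (G : Fin d → M) :
    ∑ j : Fin κ, G (Fin.castLE h j) = ∑ i ∈ univ.filter (fun i : Fin d => (i : ℕ) < κ), G i := by
  refine (sum_map univ (Fin.castLEEmb h) G).symm.trans (congrArg (fun s => ∑ i ∈ s, G i) ?_)
  ext i
  simp only [mem_map, mem_univ, true_and, mem_filter, Fin.coe_castLEEmb]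
  exact ⟨fun ⟨j, hj⟩ => hj ▸ j.isLt, fun hi => ⟨⟨i, hi⟩, rfl⟩⟩

lemma submatrix_castLE_mul_diagonal_mul_transpose {R m : Type*} [Semiring R] {κ d : ℕ}
    (h : κ ≤ d) (U : Matrix m (Fin d) R) (F : Fin d → R) :
    U.submatrix id (Fin.castLE h) * diagonal (fun j => F (Fin.castLE h j))
        * (U.submatrix id (Fin.castLE h))ᵀ
      = U * diagonal (fun i : Fin d => if (i : ℕ) < κ then F i else 0) * Uᵀ := by
  ext i i'
  rw [mul_apply, mul_apply]
  simp only [mul_diagonal, transpose_apply, submatrix_apply, id, mul_ite, ite_mul, mul_zero,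
    zero_mul]
  rw [← sum_filter, sum_castLE_eq_sum_filter_val_lt h (fun l => U i l * F l * U i' l)]

lemma Matrix.smul_one_add_smul_conj_diagonal {ι : Type*} [Fintype ι] [DecidableEq ι]
    {V : Matrix ι ι ℝ} (hV : V * Vᵀ = 1) (a t : ℝ) (e : ι → ℝ) :
    a • 1 + t • (V * diagonal e * Vᵀ) = V * diagonal (fun i => a + t * e i) * Vᵀ := by
  have hdiag : diagonal (fun i => a + t * e i) = a • 1 + t • diagonal e := by
    ext i j
    by_cases hij : i = j <;> simp [hij]
  rw [hdiag, Matrix.mul_add, Matrix.add_mul, Matrix.mul_smul, Matrix.mul_one, Matrix.smul_mul, hV,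
    Matrix.mul_smul, Matrix.smul_mul]

lemma Matrix.exists_mul_transpose_eq_conj_diagonal {m n : Type*} [Fintype m] [DecidableEq m]
    [Fintype n] (W : Matrix m n ℝ) :
    ∃ (V : Matrix m m ℝ) (μ : m → ℝ), Vᵀ * V = 1 ∧ W * Wᵀ = V * diagonal μ * Vᵀ ∧
      (∀ i, 0 ≤ μ i) ∧ #(univ.filter fun i => μ i ≠ 0) ≤ Fintype.card n := by
  have hpsd : (W * Wᵀ).PosSemidef := by
    simpa using posSemidef_self_mul_conjTranspose W
  have hA := hpsd.1
  refine ⟨hA.eigenvectorUnitary, hA.eigenvalues, ?_, ?_, hpsd.eigenvalues_nonneg, ?_⟩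
  · simpa [star_eq_conjTranspose] using Matrix.mem_unitaryGroup_iff'.mp hA.eigenvectorUnitary.2
  · simpa [Unitary.conjStarAlgAut_apply, star_eq_conjTranspose] using hA.spectral_theorem
  · rw [← Fintype.card_subtype, ← hA.rank_eq_card_non_zero_eigs]
    exact (rank_mul_le_left W Wᵀ).trans (rank_le_card_width W)

noncomputable def vaeCost {ι : Type*} [Fintype ι] [DecidableEq ι] (β : ℝ) (S C : Matrix ι ι ℝ) :
    ℝ :=
  (C⁻¹ * S).trace + β * Real.log C.det

lemma vaeCost_conj_diagonal {ι : Type*} [Fintype ι] [DecidableEq ι] (β : ℝ) (S : Matrix ι ι ℝ)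
    {V : Matrix ι ι ℝ} (hV : Vᵀ * V = 1) {c : ι → ℝ} (hc : ∀ i, 0 < c i) :
    vaeCost β S (V * diagonal c * Vᵀ) = ∑ i, ((Vᵀ * S * V) i i / c i + β * Real.log (c i)) := by
  have hV' : V * Vᵀ = 1 := mul_eq_one_comm.mp hV
  have hinv : (V * diagonal c * Vᵀ)⁻¹ = V * diagonal c⁻¹ * Vᵀ := by
    refine inv_eq_right_inv ?_
    have hcc : c * c⁻¹ = 1 := funext fun i => mul_inv_cancel₀ (hc i).ne'
    calc V * diagonal c * Vᵀ * (V * diagonal c⁻¹ * Vᵀ)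
        = V * (diagonal c * (Vᵀ * V) * diagonal c⁻¹) * Vᵀ := by simp only [Matrix.mul_assoc]
      _ = 1 := by
        rw [hV, Matrix.mul_one, diagonal_mul_diagonal, ← Pi.mul_def, hcc, Pi.one_def, diagonal_one,
          Matrix.mul_one, hV']
  have hdet : (V * diagonal c * Vᵀ).det = ∏ i, c i := by
    rw [det_mul, det_mul, mul_right_comm, ← det_mul, hV', det_one, one_mul, det_diagonal]
  have htrace : ((V * diagonal c * Vᵀ)⁻¹ * S).trace = ∑ i, (Vᵀ * S * V) i i / c i := by
    rw [hinv, Matrix.mul_assoc, Matrix.mul_assoc, trace_mul_comm, Matrix.mul_assoc]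
    simp [trace, diagonal_mul, div_eq_inv_mul]
  rw [vaeCost, htrace, hdet, Real.log_prod fun i _ => (hc i).ne', mul_sum, ← sum_add_distrib]

lemma Matrix.exists_conj_diagonal_of_orthonormal_eigenvectors {ι : Type*} [Fintype ι]
    [DecidableEq ι] {S : Matrix ι ι ℝ} {lam : ι → ℝ} {u : ι → ι → ℝ}
    (heig : ∀ i, S *ᵥ u i = lam i • u i) (horth : ∀ i j, u i ⬝ᵥ u j = if i = j then 1 else 0) :
    ∃ U : Matrix ι ι ℝ, (∀ i j, U i j = u j i) ∧ Uᵀ * U = 1 ∧ S = U * diagonal lam * Uᵀ := by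
  have hU : (of u)ᵀᵀ * (of u)ᵀ = 1 := by
    ext i j
    simpa [mul_apply, dotProduct, one_apply] using horth i j
  have hSU : S * (of u)ᵀ = (of u)ᵀ * diagonal lam := by
    ext i k
    rw [mul_diagonal]
    simpa [mul_apply, mulVec, dotProduct, mul_comm] using congr_fun (heig k) i
  refine ⟨(of u)ᵀ, fun _ _ => rfl, hU, ?_⟩
  calc S = S * ((of u)ᵀ * (of u)ᵀᵀ) := by rw [mul_eq_one_comm.mp hU, Matrix.mul_one]
    _ = (of u)ᵀ * diagonal lam * (of u)ᵀᵀ := by rw [← Matrix.mul_assoc, hSU]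

section Optimum

variable {d : ℕ} {β α : ℝ} {S U : Matrix (Fin d) (Fin d) ℝ} {lam : Fin d → ℝ}

lemma sum_sub_sum_latentGain_le_vaeCost {κ : ℕ} (hβ : 0 < β) (hα : 0 < α) (hU : Uᵀ * U = 1)
    (hS : S = U * diagonal lam * Uᵀ) (hlam : Antitone lam) (W : Matrix (Fin d) (Fin κ) ℝ) :
    ∑ i, (lam i / α + β * Real.log α)
        - ∑ i ∈ univ.filter (fun i : Fin d => (i : ℕ) < κ), latentGain β α (lam i)
      ≤ vaeCost β S (α • 1 + β⁻¹ • (W * Wᵀ)) := by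
  obtain ⟨V, μ, hV, hW, hμ0, hcard⟩ := W.exists_mul_transpose_eq_conj_diagonal
  set c : Fin d → ℝ := fun i => α + β⁻¹ * μ i
  have hc : ∀ i, α ≤ c i := fun i =>
    le_add_of_nonneg_right (mul_nonneg (inv_nonneg.2 hβ.le) (hμ0 i))
  set Q := Uᵀ * V
  have hQ : Qᵀ * Q = 1 := by
    rw [transpose_mul, transpose_transpose, Matrix.mul_assoc, ← Matrix.mul_assoc U,
      mul_eq_one_comm.mp hU, Matrix.one_mul, hV]
  have hSV : Vᵀ * S * V = Qᵀ * diagonal lam * Q := by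
    simp only [Q, hS, transpose_mul, transpose_transpose, Matrix.mul_assoc]
  set s : Fin d → ℝ := fun i => (Qᵀ * diagonal lam * Q) i i
  have htrace : ∑ i, s i = ∑ i, lam i := by
    change (Qᵀ * diagonal lam * Q).trace = _
    rw [trace_mul_cycle, mul_eq_one_comm.mp hQ, Matrix.one_mul, trace_diagonal]
  set T := univ.filter fun i => μ i ≠ 0
  have hterm : ∀ i, s i / α + β * Real.log α - (if i ∈ T then latentGain β α (s i) else 0)
      ≤ s i / c i + β * Real.log (c i) := by
    intro i
    split_ifs with hi
    · linarith [sub_le_latentGain hβ hα (s i) (hc i)]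
    · have hμ : μ i = 0 := by simpa [T] using hi
      simp [c, hμ]
  have hmajor : ∑ i ∈ T, latentGain β α (s i)
      ≤ ∑ i ∈ univ.filter (fun i : Fin d => (i : ℕ) < κ), latentGain β α (lam i) :=
    (convexOn_latentGain hβ hα).sum_diag_conj_diagonal_le (latentGain_monotone hβ hα)
      (latentGain_nonneg hβ hα) hlam hQ (hcard.trans_eq (Fintype.card_fin κ))
  rw [hW, smul_one_add_smul_conj_diagonal (mul_eq_one_comm.mp hV),
    vaeCost_conj_diagonal β S hV fun i => hα.trans_le (hc i), hSV]
  calc ∑ i, (lam i / α + β * Real.log α)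
        - ∑ i ∈ univ.filter (fun i : Fin d => (i : ℕ) < κ), latentGain β α (lam i)
      ≤ ∑ i, (s i / α + β * Real.log α) - ∑ i ∈ T, latentGain β α (s i) := by
        simp only [sum_add_distrib, ← sum_div, htrace]
        linarith
    _ = ∑ i, (s i / α + β * Real.log α - if i ∈ T then latentGain β α (s i) else 0) := by
        rw [sum_sub_distrib, sum_ite_mem, univ_inter]
    _ ≤ ∑ i, (s i / c i + β * Real.log (c i)) := sum_le_sum fun i _ => hterm i

lemma vaeCost_eq_of_mul_transpose_eq {κ : ℕ} (hβ : 0 < β) (hα : 0 < α) (hU : Uᵀ * U = 1)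
    (hS : S = U * diagonal lam * Uᵀ) {W : Matrix (Fin d) (Fin κ) ℝ}
    (hW : W * Wᵀ = U * diagonal (fun i : Fin d =>
      if (i : ℕ) < κ then max (lam i) (β * α) - β * α else 0) * Uᵀ) :
    vaeCost β S (α • 1 + β⁻¹ • (W * Wᵀ))
      = ∑ i, (lam i / α + β * Real.log α)
        - ∑ i ∈ univ.filter (fun i : Fin d => (i : ℕ) < κ), latentGain β α (lam i) := by
  set c : Fin d → ℝ := fun i => if (i : ℕ) < κ then optVariance β α (lam i) else α
  have hc : (fun i : Fin d => α + β⁻¹ *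
      if (i : ℕ) < κ then max (lam i) (β * α) - β * α else 0) = c := by
    funext i
    unfold c optVariance
    split_ifs
    · field_simp
      ring
    · ring
  have hcpos : ∀ i, 0 < c i := fun i => by
    unfold c
    split_ifs
    exacts [hα.trans_le (le_optVariance hβ _), hα]
  have hUSU : Uᵀ * S * U = diagonal lam := by
    rw [hS, Matrix.mul_assoc, Matrix.mul_assoc, hU, Matrix.mul_one, ← Matrix.mul_assoc, hU,
      Matrix.one_mul]
  rw [hW, smul_one_add_smul_conj_diagonal (mul_eq_one_comm.mp hU), hc,
    vaeCost_conj_diagonal β S hU hcpos, hUSU, sum_filter, ← sum_sub_distrib]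
  refine sum_congr rfl fun i _ => ?_
  unfold c
  split_ifs
  · simp only [diagonal_apply_eq, latentGain]
    ring
  · simp

end Optimum

theorem stmt_16_general (d κ : ℕ) (hκd : κ ≤ d)
    (β α : ℝ) (hβ : 0 < β) (hα : 0 < α)
    (Shat : Matrix (Fin d) (Fin d) ℝ)
    (lam : Fin d → ℝ) (hlam : ∀ i j : Fin d, i ≤ j → lam j ≤ lam i)
    (u : Fin d → Fin d → ℝ)
    (heig : ∀ i, Shat *ᵥ u i = lam i • u i)
    (horth : ∀ i j, u i ⬝ᵥ u j = if i = j then (1 : ℝ) else 0)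
    (k : Fin κ → ℝ)
    (hk : ∀ j : Fin κ, k j = if β * α ≤ lam (Fin.castLE hκd j)
      then lam (Fin.castLE hκd j) else β * α)
    (Uκ : Matrix (Fin d) (Fin κ) ℝ)
    (hU : ∀ (i : Fin d) (j : Fin κ), Uκ i j = u (Fin.castLE hκd j) i)
    (What : Matrix (Fin d) (Fin κ) ℝ)
    (hWhat : What = Uκ * Matrix.diagonal fun j => Real.sqrt (k j - β * α))
    (C : Matrix (Fin d) (Fin κ) ℝ → Matrix (Fin d) (Fin d) ℝ)
    (hC : ∀ W, C W = α • (1 : Matrix (Fin d) (Fin d) ℝ) + β⁻¹ • (W * Wᵀ))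
    (L : Matrix (Fin d) (Fin κ) ℝ → ℝ)
    (hL : ∀ W, L W = -(1 / 2) * (((C W)⁻¹ * Shat).trace
      + β * Real.log (C W).det)) :
    (∀ W : Matrix (Fin d) (Fin κ) ℝ, L W ≤ L What) ∧
    ∀ R : Matrix (Fin κ) (Fin κ) ℝ, R * Rᵀ = 1 → L (What * R) = L What := by
  obtain ⟨U, hUu, hUU, hS⟩ := exists_conj_diagonal_of_orthonormal_eigenvectors heig horth
  have hk' : ∀ j, k j = max (lam (Fin.castLE hκd j)) (β * α) := fun j => by rw [hk, max_def']
  have hWW : What * Whatᵀ = U * diagonal (fun i : Fin d =>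
      if (i : ℕ) < κ then max (lam i) (β * α) - β * α else 0) * Uᵀ := by
    have hUκ : Uκ = U.submatrix id (Fin.castLE hκd) := by
      ext i j
      rw [hU, submatrix_apply, hUu, id]
    have hsq : (diagonal fun j => √(k j - β * α)) * (diagonal fun j => √(k j - β * α))
        = diagonal fun j => max (lam (Fin.castLE hκd j)) (β * α) - β * α := by
      rw [diagonal_mul_diagonal]
      congr 1
      funext j
      rw [Real.mul_self_sqrt (sub_nonneg.2 (hk' j ▸ le_max_right _ _)), hk']
    rw [hWhat, transpose_mul, diagonal_transpose, ← Matrix.mul_assoc, Matrix.mul_assoc Uκ, hsq, hUκ]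
    exact submatrix_castLE_mul_diagonal_mul_transpose hκd U fun i => max (lam i) (β * α) - β * α
  have hLC : ∀ W, L W = -(1 / 2) * vaeCost β Shat (α • 1 + β⁻¹ • (W * Wᵀ)) := fun W => by
    rw [hL, hC, vaeCost]
  refine ⟨fun W => ?_, fun R hR => ?_⟩
  · rw [hLC, hLC, vaeCost_eq_of_mul_transpose_eq hβ hα hUU hS hWW]
    linarith [sum_sub_sum_latentGain_le_vaeCost hβ hα hUU hS hlam W]
  · rw [hL, hL, hC, hC, transpose_mul, Matrix.mul_assoc, ← Matrix.mul_assoc R, hR,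
      Matrix.one_mul]

/-- MLE for the affine-decoder β-VAE objective (pPCA form). Let `Ŝ` be a
symmetric positive semidefinite d×d matrix with decreasingly ordered
eigenvalues `λ` and orthonormal eigenvectors `u`. With
`C(W) = αI + β⁻¹WWᵀ` and `L(W) = −½(tr(C(W)⁻¹Ŝ) + β·log det C(W))`, the matrix
`Ŵ = U_κ · diag(√(k₁ − βα), …, √(k_κ − βα))`, where `k_j = max(λ_j, βα)` and
`U_κ` collects the top κ eigenvectors, is a global maximizer of `L`, and `L`
is invariant under right multiplication of `Ŵ` by orthogonal matrices. -/
theorem stmt_16 (d κ : ℕ) (hκ : 1 ≤ κ) (hκd : κ ≤ d)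
    (β α : ℝ) (hβ : 0 < β) (hα : 0 < α)
    (Shat : Matrix (Fin d) (Fin d) ℝ) (hShat : Shat.PosSemidef)
    (lam : Fin d → ℝ) (hlam : ∀ i j : Fin d, i ≤ j → lam j ≤ lam i)
    (u : Fin d → Fin d → ℝ)
    (heig : ∀ i, Shat *ᵥ u i = lam i • u i)
    (horth : ∀ i j, u i ⬝ᵥ u j = if i = j then (1 : ℝ) else 0)
    (k : Fin κ → ℝ)
    (hk : ∀ j : Fin κ, k j = if β * α ≤ lam (Fin.castLE hκd j)
      then lam (Fin.castLE hκd j) else β * α)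
    (Uκ : Matrix (Fin d) (Fin κ) ℝ)
    (hU : ∀ (i : Fin d) (j : Fin κ), Uκ i j = u (Fin.castLE hκd j) i)
    (What : Matrix (Fin d) (Fin κ) ℝ)
    (hWhat : What = Uκ * Matrix.diagonal fun j => Real.sqrt (k j - β * α))
    (C : Matrix (Fin d) (Fin κ) ℝ → Matrix (Fin d) (Fin d) ℝ)
    (hC : ∀ W, C W = α • (1 : Matrix (Fin d) (Fin d) ℝ) + β⁻¹ • (W * Wᵀ))
    (L : Matrix (Fin d) (Fin κ) ℝ → ℝ)
    (hL : ∀ W, L W = -(1 / 2) * (((C W)⁻¹ * Shat).trace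
      + β * Real.log (C W).det)) :
    (∀ W : Matrix (Fin d) (Fin κ) ℝ, L W ≤ L What) ∧
    ∀ R : Matrix (Fin κ) (Fin κ) ℝ, R * Rᵀ = 1 → L (What * R) = L What :=
  stmt_16_general d κ hκd β α hβ hα Shat lam hlam u heig horth k hk Uκ hU What hWhat C hC L hL
end
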